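/- Let 𝔖 = {R_1, …, R_L} with L > 0 be a simple semi-Thue system over {0, 1, …, K}, let u be a fixed free term variable, and let m > 0. Then: (a) every M ∈ Q_m satisfies Γ_m ⊢ M : κ, S_F(M)[p_1 := I, …, p_m := I] =β u, and S_H(M)[p_1 := δ_•, …, p_m := δ_•] =β π_1; and (b) every M ∈ R_m satisfies S_F(M)[p_1 := I, …, p_m := I] =β u and S_H(M)[p_1 := δ_•, …, p_m := δ_•] =β π_$. -/

import Mathlib

set_option maxHeartbeats 1000000

/-- Untyped λ-terms with de Bruijn indices. -/
inductive Tm : Type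
  | var : ℕ → Tm
  | app : Tm → Tm → Tm
  | lam : Tm → Tm
deriving DecidableEq

/-- Simple types over the single ground atom ι. -/
inductive Ty : Type
  | atom : Ty
  | arr : Ty → Ty → Ty
deriving DecidableEq

/-- Lift a renaming under a binder. -/
def upRen (ξ : ℕ → ℕ) : ℕ → ℕ
  | 0 => 0
  | n + 1 => ξ n + 1

/-- Renaming of de Bruijn variables. -/
def rename (ξ : ℕ → ℕ) : Tm → Tm
  | .var n => .var (ξ n)
  | .app s t => .app (rename ξ s) (rename ξ t)
  | .lam s => .lam (rename (upRen ξ) s)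

/-- Lift a substitution under a binder. -/
def up (σ : ℕ → Tm) : ℕ → Tm
  | 0 => .var 0
  | n + 1 => rename Nat.succ (σ n)

/-- Parallel (capture-avoiding) substitution. -/
def subst (σ : ℕ → Tm) : Tm → Tm
  | .var n => σ n
  | .app s t => .app (subst σ s) (subst σ t)
  | .lam s => .lam (subst (up σ) s)

/-- Cons a term onto a substitution. -/
def scons (N : Tm) (σ : ℕ → Tm) : ℕ → Tm
  | 0 => N
  | n + 1 => σ n

/-- Substitution of the topmost free variable: `M[x₀ := N]` (β-substitution). -/
def subst1 (N M : Tm) : Tm := subst (scons N Tm.var) M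

/-- β-reduction: contextual closure of `(λx.M) N →β M[x := N]`. -/
inductive Step : Tm → Tm → Prop
  | beta (s t : Tm) : Step (.app (.lam s) t) (subst1 t s)
  | appL {s s' : Tm} (t : Tm) : Step s s' → Step (.app s t) (.app s' t)
  | appR (s : Tm) {t t' : Tm} : Step t t' → Step (.app s t) (.app s t')
  | lam {s s' : Tm} : Step s s' → Step (.lam s) (.lam s')

/-- β-equivalence: reflexive, transitive, symmetric closure of β-reduction. -/
def Conv (M N : Tm) : Prop := Relation.EqvGen Step M N

/-- A term is in normal form if it admits no β-reduction step. -/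
def NormalTm (M : Tm) : Prop := ∀ N, ¬ Step M N

/-- Simple type system (de Bruijn contexts as lists, innermost binder first). -/
inductive Stlc : List Ty → Tm → Ty → Prop
  | var {Γ : List Ty} {x : ℕ} {t : Ty} : Γ[x]? = some t → Stlc Γ (.var x) t
  | app {Γ : List Ty} {M N : Tm} {s t : Ty} :
      Stlc Γ M (.arr s t) → Stlc Γ N s → Stlc Γ (.app M N) t
  | lam {Γ : List Ty} {M : Tm} {s t : Ty} :
      Stlc (s :: Γ) M t → Stlc Γ (.lam M) (.arr s t)

/-- The identity term `I = λx.x`. -/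
def Itm : Tm := .lam (.var 0)

/-- `n` nested λ-abstractions. -/
def lamN : ℕ → Tm → Tm
  | 0, M => M
  | n + 1, M => .lam (lamN n M)

/-- Iterated application `M N₁ … Nₖ`. -/
def appList (M : Tm) (l : List Tm) : Tm := l.foldl .app M

/-- `n`-fold arrow type `ι → … → ι → t`. -/
def arrN : ℕ → Ty → Ty
  | 0, t => t
  | n + 1, t => .arr .atom (arrN n t)

/-- A rewrite rule `ab ⇒ cd`, stored as `((a,b),(c,d))`; symbols are naturals. -/
abbrev SRule := (ℕ × ℕ) × (ℕ × ℕ)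

/-- One-step rewriting of a simple semi-Thue system given by a list of rules. -/
def SStep (Rs : List SRule) (u v : List ℕ) : Prop :=
  ∃ x y a b c d, ((a, b), (c, d)) ∈ Rs ∧ u = x ++ a :: b :: y ∧ v = x ++ c :: d :: y

/-- Many-step rewriting `⇒*`. -/
def SRew (Rs : List SRule) : List ℕ → List ℕ → Prop := Relation.ReflTransGen (SStep Rs)

/-! Extended alphabet `𝒜 = {0,…,K} ∪ {$, •, ⊤, ⊥}` of size `K+5`, encoded as
`0,…,K` for letters, `K+1` for `$`, `K+2` for `•`, `K+3` for `⊤`, `K+4` for `⊥`. -/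

/-- The simple type `κ` with `|𝒜| = K+5` argument positions. -/
def tyK (K : ℕ) : Ty := arrN (K + 5) .atom

/-- `κ → κ`, the type of `p_j`. -/
def tyP (K : ℕ) : Ty := .arr (tyK K) (tyK K)

/-- `(κ→κ) → κ → κ`, the type of `z_0` and of each `r_i`. -/
def tyZ0 (K : ℕ) : Ty := .arr (tyP K) (.arr (tyK K) (tyK K))

/-- `(κ→κ) → ((κ→κ) → κ) → κ`, the type of `z_⋆`. -/
def tyZstar (K : ℕ) : Ty := .arr (tyP K) (.arr (.arr (tyP K) (tyK K)) (tyK K))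

/-- The variable `s_i` under the `K+5` binders `λ s_0 … s_K s_$ s_• s_⊤ s_⊥`. -/
def sv (K i : ℕ) : Tm := .var (K + 4 - i)

/-- `case x of {…}`: the application `x N_0 N_1 … N_K N_$ N_• N_⊤ N_⊥`,
where the branch for symbol `i` is `f i`. -/
def caseOf (K : ℕ) (x : Tm) (f : ℕ → Tm) : Tm := appList x ((List.range (K + 5)).map f)

/-- The projection `π_i = λ s_0 … s_⊥ . s_i`. -/
def piTm (K i : ℕ) : Tm := lamN (K + 5) (sv K i)

/-- `δ_i = λx. λ s_0 … s_⊥ . case x of {⊤ ↦ s_i} else s_⊥`. -/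
def deltaTm (K i : ℕ) : Tm :=
  .lam (lamN (K + 5) (caseOf K (.var (K + 5))
    (fun j => if j = K + 3 then sv K i else sv K (K + 4))))

/-- `H_⋆ = λh.λg.λ s_0 … s_⊥ . case (g δ_•) of {$ ↦ s_$} else s_⊥`. -/
def Hstar (K : ℕ) : Tm :=
  .lam (.lam (lamN (K + 5) (caseOf K (.app (.var (K + 5)) (deltaTm K (K + 2)))
    (fun j => if j = K + 1 then sv K (K + 1) else sv K (K + 4)))))

/-- `H_0 = λh.λx.λ s_0 … s_⊥ . case x of {1 ↦ s_$} else s_⊥`. -/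
def H0 (K : ℕ) : Tm :=
  .lam (.lam (lamN (K + 5) (caseOf K (.var (K + 5))
    (fun j => if j = 1 then sv K (K + 1) else sv K (K + 4)))))

/-- `H_R = λh.λx.λ s_0 … s_⊥ . case (h π_⊤) of {• ↦ case x of {1 ↦ s_1} else s_⊥} else s_⊥`. -/
def HR (K : ℕ) : Tm :=
  .lam (.lam (lamN (K + 5) (caseOf K (.app (.var (K + 6)) (piTm K (K + 3)))
    (fun j => if j = K + 2 then
        caseOf K (.var (K + 5)) (fun j' => if j' = 1 then sv K 1 else sv K (K + 4))
      else sv K (K + 4)))))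

/-- `G_⋆` (word expansion). -/
def Gstar (K : ℕ) : Tm :=
  .lam (.lam (lamN (K + 5) (caseOf K (.app (.var (K + 6)) (piTm K (K + 3))) (fun j =>
    if j = K + 2 then
      caseOf K (.app (.var (K + 5)) (deltaTm K (K + 2))) (fun j1 =>
        if j1 = 0 then sv K 0
        else if j1 = K + 1 then
          caseOf K (.app (.var (K + 5)) (deltaTm K 0))
            (fun j2 => if j2 = 1 then sv K (K + 1) else sv K (K + 4))
        else sv K (K + 4))
    else if j = 0 then
      caseOf K (.app (.var (K + 5)) (deltaTm K 1))
        (fun j1 => if j1 = 0 then sv K 1 else sv K (K + 4))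
    else if j = 1 then
      caseOf K (.app (.var (K + 5)) (deltaTm K (K + 2)))
        (fun j1 => if j1 = 0 then sv K 0 else sv K (K + 4))
    else sv K (K + 4)))))

/-- `G_0` (initialization with 0s). -/
def G0 (K : ℕ) : Tm :=
  .lam (.lam (lamN (K + 5) (caseOf K (.app (.var (K + 6)) (piTm K (K + 3))) (fun j =>
    if j = K + 2 then
      caseOf K (.var (K + 5))
        (fun j1 => if j1 = 0 then sv K 0 else if j1 = 1 then sv K (K + 1) else sv K (K + 4))
    else if j = 0 then
      caseOf K (.var (K + 5)) (fun j1 => if j1 = 0 then sv K 1 else sv K (K + 4))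
    else if j = 1 then
      caseOf K (.var (K + 5)) (fun j1 => if j1 = 0 then sv K 0 else sv K (K + 4))
    else sv K (K + 4)))))

/-- `G_{ab⇒cd}` (rule application), for the rule `R = ((a,b),(c,d))`. -/
def Grule (K : ℕ) (R : SRule) : Tm :=
  .lam (.lam (lamN (K + 5) (caseOf K (.app (.var (K + 6)) (piTm K (K + 3))) (fun j =>
    if j = K + 2 then
      caseOf K (.var (K + 5)) (fun j1 => sv K j1)
    else if j = 0 then
      caseOf K (.var (K + 5)) (fun j1 => if j1 = R.2.2 then sv K R.1.2 else sv K (K + 4))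
    else if j = 1 then
      caseOf K (.var (K + 5)) (fun j1 => if j1 = R.2.1 then sv K R.1.1 else sv K (K + 4))
    else sv K (K + 4)))))

/-- `G_j^i`: `δ_1` if `i = j`, `δ_0` if `i = j+1`, `δ_•` otherwise. -/
def Gji (K i j : ℕ) : Tm :=
  if i = j then deltaTm K 1 else if i = j + 1 then deltaTm K 0 else deltaTm K (K + 2)

/-! De Bruijn convention for the free variables of terms in `Q_m`, `R_m`
(for a system with `L` rules): `p_j ↦ var (m - j)` (so `p_m ↦ var 0`, …, `p_1 ↦ var (m-1)`),
`z_⋆ ↦ var m`, `z_1 ↦ var (m+1)`, `z_0 ↦ var (m+2)`, `r_i ↦ var (m+3+L-i)`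
(so `r_L ↦ var (m+3)`, …, `r_1 ↦ var (m+2+L)`). -/

/-- The type environment `Γ_m` (as a de Bruijn context). -/
def GammaEnv (L K m : ℕ) : List Ty :=
  List.replicate m (tyP K) ++ tyZstar K :: tyK K :: tyZ0 K :: List.replicate L (tyZ0 K)

/-- The set `Q_m` of terms (for a system with `L` rules). -/
inductive Qset (L : ℕ) : ℕ → Tm → Prop
  | z1 (m : ℕ) : Qset L m (.var (m + 1))
  | rule (m i j : ℕ) (M : Tm) : 1 ≤ i → i ≤ L → 1 ≤ j → j ≤ m → Qset L m M →
      Qset L m (.app (.app (.var (m + 3 + L - i)) (.var (m - j))) M)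
  | ruleEta (m i j : ℕ) (M : Tm) : 1 ≤ i → i ≤ L → 1 ≤ j → j ≤ m → Qset L m M →
      Qset L m (.app (.app (.var (m + 3 + L - i)) (.lam (.app (.var (m - j + 1)) (.var 0)))) M)

/-- The set `R_m` of terms (for a system with `L` rules). -/
inductive Rset (L : ℕ) : ℕ → Tm → Prop
  | init (m : ℕ) (N M : Tm) : Qset L m M → Rset L m (.app (.app (.var (m + 2)) N) M)
  | expand (m : ℕ) (N M : Tm) : Rset L (m + 1) M → Rset L m (.app (.app (.var m) N) (.lam M))

/-- A simultaneous substitution on the free variables of terms in `Q_m`/`R_m`: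
`p_j ↦ P j`, `z_⋆ ↦ Xstar`, `z_1 ↦ X1`, `z_0 ↦ X0`, `r_i ↦ Xr i`; other variables fixed. -/
def mkSub (L m : ℕ) (P : ℕ → Tm) (Xstar X1 X0 : Tm) (Xr : ℕ → Tm) : ℕ → Tm := fun k =>
  if k < m then P (m - k)
  else if k = m then Xstar
  else if k = m + 1 then X1
  else if k = m + 2 then X0
  else if k < m + 3 + L then Xr (m + 3 + L - k)
  else .var k

/-- The substitution `S_F` combined with `[p_j := P j]`; the fixed free variable `u`
is taken to be `var 0` (in the resulting scope). -/
def SF (L m : ℕ) (P : ℕ → Tm) : ℕ → Tm :=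
  mkSub L m P (.lam (.lam (.app (.var 0) Itm))) (.var 0) (.lam Itm) (fun _ => Itm)

/-- The substitution `S_H` combined with `[p_j := P j]`. -/
def SH (L K m : ℕ) (P : ℕ → Tm) : ℕ → Tm :=
  mkSub L m P (Hstar K) (piTm K 1) (H0 K) (fun _ => HR K)

/-- The substitution `S_G` combined with `[p_j := P j]` (`r_i ↦ G_{R_i}`). -/
def SG (K : ℕ) (Rs : List SRule) (m : ℕ) (P : ℕ → Tm) : ℕ → Tm :=
  mkSub Rs.length m P (Gstar K) (piTm K 1) (G0 K)
    (fun i => Grule K (Rs.getD (i - 1) ((0, 0), (0, 0))))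

/-- The simple type `σ_𝔖 = Γ_1(r_1) → ⋯ → Γ_1(r_L) → Γ_1(z_0) → Γ_1(z_1) → Γ_1(z_⋆) → Γ_1(p_1) → κ`. -/
def sigmaTy (L K : ℕ) : Ty :=
  (List.replicate L (tyZ0 K) ++ [tyZ0 K, tyK K, tyZstar K, tyP K]).foldr .arr (tyK K)


/-! ### Auxiliary infrastructure -/

section Aux

lemma rename_ext {ξ ζ : ℕ → ℕ} (h : ∀ n, ξ n = ζ n) : ∀ s, rename ξ s = rename ζ s := by
  intro s
  induction s generalizing ξ ζ with
  | var n => simp [rename, h]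
  | app s t ihs iht => simp [rename, ihs h, iht h]
  | lam s ih =>
    simp only [rename, Tm.lam.injEq]
    exact ih (fun n => by cases n <;> simp [upRen, h])

lemma subst_ext {σ τ : ℕ → Tm} (h : ∀ n, σ n = τ n) : ∀ s, subst σ s = subst τ s := by
  intro s
  induction s generalizing σ τ with
  | var n => simp [subst, h]
  | app s t ihs iht => simp [subst, ihs h, iht h]
  | lam s ih =>
    simp only [subst, Tm.lam.injEq]
    exact ih (fun n => by cases n <;> simp [up, h])

lemma rename_rename (ξ ζ : ℕ → ℕ) : ∀ s, rename ζ (rename ξ s) = rename (fun n => ζ (ξ n)) s := by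
  intro s
  induction s generalizing ξ ζ with
  | var n => simp [rename]
  | app s t ihs iht => simp [rename, ihs, iht]
  | lam s ih =>
    simp only [rename, Tm.lam.injEq]
    rw [ih]
    exact rename_ext (fun n => by cases n <;> simp [upRen]) s

lemma subst_rename (ξ : ℕ → ℕ) (τ : ℕ → Tm) :
    ∀ s, subst τ (rename ξ s) = subst (fun n => τ (ξ n)) s := by
  intro s
  induction s generalizing ξ τ with
  | var n => simp [rename, subst]
  | app s t ihs iht => simp [rename, subst, ihs, iht]
  | lam s ih =>
    simp only [rename, subst, Tm.lam.injEq]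
    rw [ih]
    exact subst_ext (fun n => by cases n <;> simp [up, upRen]) s

lemma rename_subst (ξ : ℕ → ℕ) (σ : ℕ → Tm) :
    ∀ s, rename ξ (subst σ s) = subst (fun n => rename ξ (σ n)) s := by
  intro s
  induction s generalizing ξ σ with
  | var n => simp [rename, subst]
  | app s t ihs iht => simp [rename, subst, ihs, iht]
  | lam s ih =>
    simp only [rename, subst, Tm.lam.injEq]
    rw [ih]
    refine subst_ext (fun n => ?_) s
    cases n with
    | zero => simp [up, rename, upRen]
    | succ n =>
      simp only [up, rename_rename]
      exact rename_ext (fun k => by simp [upRen]) _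

lemma subst_subst (σ τ : ℕ → Tm) :
    ∀ s, subst τ (subst σ s) = subst (fun n => subst τ (σ n)) s := by
  intro s
  induction s generalizing σ τ with
  | var n => simp [subst]
  | app s t ihs iht => simp [subst, ihs, iht]
  | lam s ih =>
    simp only [subst, Tm.lam.injEq]
    rw [ih]
    refine subst_ext (fun n => ?_) s
    cases n with
    | zero => simp [up, subst]
    | succ n =>
      simp only [up, subst_rename, rename_subst]

lemma rename_eq_subst (ξ : ℕ → ℕ) : ∀ s, rename ξ s = subst (fun n => .var (ξ n)) s := by
  intro s
  induction s generalizing ξ with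
  | var n => simp [rename, subst]
  | app s t ihs iht => simp [rename, subst, ihs, iht]
  | lam s ih =>
    simp only [rename, subst, Tm.lam.injEq]
    rw [ih]
    exact subst_ext (fun n => by cases n <;> simp [up, upRen, rename]) s

lemma subst_id : ∀ s, subst Tm.var s = s := by
  intro s
  induction s with
  | var n => rfl
  | app s t ihs iht => simp [subst, ihs, iht]
  | lam s ih =>
    simp only [subst, Tm.lam.injEq]
    rw [subst_ext (σ := up Tm.var) (τ := Tm.var) (fun n => by cases n <;> simp [up, rename]) s]
    exact ih

lemma rename_id (s : Tm) : rename id s = s := by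
  rw [rename_eq_subst]; exact subst_id s

/-- Free variables of `s` are all `< n`. -/
def Below : ℕ → Tm → Prop
  | n, .var k => k < n
  | n, .app s t => Below n s ∧ Below n t
  | n, .lam s => Below (n + 1) s

lemma below_mono {n m : ℕ} (h : n ≤ m) : ∀ {s}, Below n s → Below m s := by
  intro s
  induction s generalizing n m with
  | var k => intro hk; exact lt_of_lt_of_le hk h
  | app s t ihs iht => rintro ⟨h1, h2⟩; exact ⟨ihs h h1, iht h h2⟩
  | lam s ih => intro hs; exact ih (by omega) hs

lemma subst_below {n : ℕ} {σ : ℕ → Tm} (hσ : ∀ k, k < n → σ k = .var k) :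
    ∀ {s}, Below n s → subst σ s = s := by
  intro s
  induction s generalizing n σ with
  | var k => intro hk; simp [subst, hσ k hk]
  | app s t ihs iht => rintro ⟨h1, h2⟩; simp [subst, ihs hσ h1, iht hσ h2]
  | lam s ih =>
    intro hs
    simp only [subst, Tm.lam.injEq]
    refine ih (n := n + 1) (fun k hk => ?_) hs
    cases k with
    | zero => rfl
    | succ k => simp [up, hσ k (by omega), rename]

lemma closed_subst {σ : ℕ → Tm} {s : Tm} (h : Below 0 s) : subst σ s = s :=
  subst_below (fun k hk => by omega) h

lemma closed_rename {ξ : ℕ → ℕ} {s : Tm} (h : Below 0 s) : rename ξ s = s := by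
  rw [rename_eq_subst]; exact closed_subst h

end Aux


section Red

/-- Many-step β-reduction. -/
def Red : Tm → Tm → Prop := Relation.ReflTransGen Step

lemma Red.refl {s : Tm} : Red s s := Relation.ReflTransGen.refl

lemma Red.trans {s t u : Tm} (h1 : Red s t) (h2 : Red t u) : Red s u :=
  Relation.ReflTransGen.trans h1 h2

lemma Red.of_step {s t : Tm} (h : Step s t) : Red s t := Relation.ReflTransGen.single h

lemma Red.conv {s t : Tm} (h : Red s t) : Conv s t := by
  induction h with
  | refl => exact Relation.EqvGen.refl _
  | tail _ h2 ih => exact Relation.EqvGen.trans _ _ _ ih (Relation.EqvGen.rel _ _ h2)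

lemma Conv.refl (s : Tm) : Conv s s := Relation.EqvGen.refl s
lemma Conv.symm {s t : Tm} (h : Conv s t) : Conv t s := Relation.EqvGen.symm _ _ h
lemma Conv.trans {s t u : Tm} (h1 : Conv s t) (h2 : Conv t u) : Conv s u :=
  Relation.EqvGen.trans _ _ _ h1 h2

lemma Red.appL {s s' : Tm} (t : Tm) (h : Red s s') : Red (.app s t) (.app s' t) := by
  induction h with
  | refl => exact Red.refl
  | tail _ h2 ih => exact Red.trans ih (Red.of_step (Step.appL _ h2))

lemma Red.appR (s : Tm) {t t' : Tm} (h : Red t t') : Red (.app s t) (.app s t') := by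
  induction h with
  | refl => exact Red.refl
  | tail _ h2 ih => exact Red.trans ih (Red.of_step (Step.appR _ h2))

lemma Red.app {s s' t t' : Tm} (h1 : Red s s') (h2 : Red t t') :
    Red (.app s t) (.app s' t') := Red.trans (Red.appL _ h1) (Red.appR _ h2)

lemma Red.lam {s s' : Tm} (h : Red s s') : Red (.lam s) (.lam s') := by
  induction h with
  | refl => exact Red.refl
  | tail _ h2 ih => exact Red.trans ih (Red.of_step (Step.lam h2))

lemma Conv.appLc {s s' : Tm} (t : Tm) (h1 : Conv s s') : Conv (.app s t) (.app s' t) := by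
  induction h1 with
  | rel a b h => exact Relation.EqvGen.rel _ _ (Step.appL _ h)
  | refl a => exact Conv.refl _
  | symm a b _ ih => exact ih.symm
  | trans a b c _ _ ih1 ih2 => exact ih1.trans ih2

lemma Conv.appRc (s : Tm) {t t' : Tm} (h2 : Conv t t') : Conv (.app s t) (.app s t') := by
  induction h2 with
  | rel a b h => exact Relation.EqvGen.rel _ _ (Step.appR _ h)
  | refl a => exact Conv.refl _
  | symm a b _ ih => exact ih.symm
  | trans a b c _ _ ih1 ih2 => exact ih1.trans ih2

lemma Conv.app {s s' t t' : Tm} (h1 : Conv s s') (h2 : Conv t t') :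
    Conv (.app s t) (.app s' t') := (Conv.appLc t h1).trans (Conv.appRc s' h2)

lemma Conv.lamc {s s' : Tm} (h : Conv s s') : Conv (.lam s) (.lam s') := by
  induction h with
  | rel a b h => exact Relation.EqvGen.rel _ _ (Step.lam h)
  | refl a => exact Conv.refl _
  | symm a b _ ih => exact ih.symm
  | trans a b c _ _ ih1 ih2 => exact ih1.trans ih2

lemma step_rename (ξ : ℕ → ℕ) {s t : Tm} (h : Step s t) :
    Step (rename ξ s) (rename ξ t) := by
  induction h generalizing ξ with
  | beta s t =>
    have : rename ξ (subst1 t s) = subst1 (rename ξ t) (rename (upRen ξ) s) := by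
      simp only [subst1, rename_subst, subst_rename]
      refine subst_ext (fun n => ?_) s
      cases n with
      | zero => rfl
      | succ n => simp [scons, upRen, rename]
    rw [rename]
    have hb := Step.beta (rename (upRen ξ) s) (rename ξ t)
    rw [← this] at hb
    exact hb
  | appL t _ ih => exact Step.appL _ (ih ξ)
  | appR s _ ih => exact Step.appR _ (ih ξ)
  | lam _ ih => exact Step.lam (ih (upRen ξ))

lemma Conv.rename (ξ : ℕ → ℕ) {s t : Tm} (h : Conv s t) :
    Conv (rename ξ s) (rename ξ t) := by
  induction h with
  | rel a b h => exact Relation.EqvGen.rel _ _ (step_rename ξ h)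
  | refl a => exact Conv.refl _
  | symm a b _ ih => exact ih.symm
  | trans a b c _ _ ih1 ih2 => exact ih1.trans ih2

lemma Red.appList {s s' : Tm} (l : List Tm) (h : Red s s') :
    Red (appList s l) (appList s' l) := by
  induction l generalizing s s' with
  | nil => exact h
  | cons a l ih => exact ih (Red.appL a h)

lemma Conv.appList {s s' : Tm} (l : List Tm) (h : Conv s s') :
    Conv (appList s l) (appList s' l) := by
  induction l generalizing s s' with
  | nil => exact h
  | cons a l ih => exact ih (Conv.app h (Conv.refl a))

lemma Red.lamN {s s' : Tm} (n : ℕ) (h : Red s s') : Red (lamN n s) (lamN n s') := by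
  induction n generalizing s s' with
  | zero => exact h
  | succ n ih => exact Red.lam (ih h)

lemma Conv.lamN {s s' : Tm} (n : ℕ) (h : Conv s s') : Conv (lamN n s) (lamN n s') := by
  induction n generalizing s s' with
  | zero => exact h
  | succ n ih => exact Conv.lamc (ih h)

end Red

section UpN

/-- Iterated lifting of a substitution. -/
def upN : ℕ → (ℕ → Tm) → (ℕ → Tm)
  | 0, σ => σ
  | n + 1, σ => upN n (up σ)

lemma upN_succ (n : ℕ) (σ : ℕ → Tm) : ∀ k, upN (n + 1) σ k = up (upN n σ) k := by
  induction n generalizing σ with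
  | zero => intro k; rfl
  | succ n ih =>
    intro k
    show upN (n + 1) (up σ) k = _
    rw [ih (up σ) k]
    simp [upN]

lemma subst_lamN (σ : ℕ → Tm) (n : ℕ) (s : Tm) :
    subst σ (lamN n s) = lamN n (subst (upN n σ) s) := by
  induction n generalizing σ with
  | zero => rfl
  | succ n ih => simp only [lamN, subst, ih (up σ)]; rfl

lemma upN_lt (σ : ℕ → Tm) : ∀ n k, k < n → upN n σ k = .var k := by
  intro n
  induction n with
  | zero => omega
  | succ n ih =>
    intro k hk
    rw [upN_succ]
    rcases k with _ | k
    · rfl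
    · simp only [up, ih k (by omega), rename]

lemma upN_ge (σ : ℕ → Tm) : ∀ n k, upN n σ (k + n) = rename (· + n) (σ k) := by
  intro n
  induction n with
  | zero =>
    intro k
    show σ k = rename (· + 0) (σ k)
    rw [rename_ext (ζ := id) (fun j => Nat.add_zero j) (σ k), rename_id]
  | succ n ih =>
    intro k
    rw [upN_succ]
    show up (upN n σ) (k + n + 1) = _
    simp only [up, ih k, rename_rename]
    exact rename_ext (fun j => by omega) _

lemma subst_appList (σ : ℕ → Tm) (s : Tm) (l : List Tm) :
    subst σ (appList s l) = appList (subst σ s) (l.map (subst σ)) := by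
  induction l generalizing s with
  | nil => rfl
  | cons a l ih => simpa [appList, List.map, subst] using ih (.app s a)

lemma subst_caseOf (K : ℕ) (σ : ℕ → Tm) (x : Tm) (f : ℕ → Tm) :
    subst σ (caseOf K x f) = caseOf K (subst σ x) (fun j => subst σ (f j)) := by
  simp [caseOf, subst_appList, List.map_map, Function.comp_def]

end UpN


section Proj

lemma red_two_beta (b A B : Tm) :
    Red (.app (.app (.lam (.lam b)) A) B) (subst (scons B (scons A Tm.var)) b) := by
  have s1 : Step (Tm.app (.lam (.lam b)) A) (subst1 A (.lam b)) := Step.beta _ _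
  have e1 : subst1 A (.lam b) = .lam (subst (up (scons A Tm.var)) b) := rfl
  refine Red.trans (Red.appL B (Red.of_step s1)) ?_
  rw [e1]
  have s2 : Step (Tm.app (.lam (subst (up (scons A Tm.var)) b)) B)
      (subst1 B (subst (up (scons A Tm.var)) b)) := Step.beta _ _
  refine Red.trans (Red.of_step s2) ?_
  have : subst1 B (subst (up (scons A Tm.var)) b) = subst (scons B (scons A Tm.var)) b := by
    simp only [subst1, subst_subst]
    refine subst_ext (fun n => ?_) b
    cases n with
    | zero => rfl
    | succ n => simp [up, subst_rename, scons]; cases n <;> simp [scons, subst, subst_id]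
  rw [this]
  exact Red.refl

lemma red_apply_shift : ∀ (l : List Tm) (N : Tm),
    Red (appList (lamN l.length (rename (· + l.length) N)) l) N := by
  intro l
  induction l with
  | nil =>
    intro N
    simp only [List.length_nil, appList, List.foldl_nil, lamN]
    rw [rename_ext (ζ := id) (fun j => Nat.add_zero j) N, rename_id]
    exact Red.refl
  | cons a l ih =>
    intro N
    show Red (appList (.app (.lam (lamN l.length (rename (· + (l.length + 1)) N))) a) l) N
    have hstep : Step (Tm.app (.lam (lamN l.length (rename (· + (l.length + 1)) N))) a)
        (subst1 a (lamN l.length (rename (· + (l.length + 1)) N))) := Step.beta _ _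
    have he : subst1 a (lamN l.length (rename (· + (l.length + 1)) N))
        = lamN l.length (rename (· + l.length) N) := by
      simp only [subst1, subst_lamN, subst_rename]
      congr 1
      rw [rename_eq_subst]
      refine subst_ext (fun n => ?_) N
      have h1 : n + (l.length + 1) = (n + 1) + l.length := by omega
      rw [h1, upN_ge]
      simp [scons, rename]
    refine Red.trans (Red.appList l (Red.of_step hstep)) ?_
    rw [he]
    exact ih N

lemma red_lamN_var : ∀ (l : List Tm) (v : ℕ), v < l.length →
    Red (appList (lamN l.length (.var v)) l) (l.getD (l.length - 1 - v) (.var 0)) := by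
  intro l
  induction l with
  | nil => intro v hv; simp at hv
  | cons a l ih =>
    intro v hv
    simp only [List.length_cons] at hv
    show Red (appList (.app (.lam (lamN l.length (.var v))) a) l) _
    have hstep : Step (Tm.app (.lam (lamN l.length (.var v))) a)
        (subst1 a (lamN l.length (.var v))) := Step.beta _ _
    have he : subst1 a (lamN l.length (.var v))
        = lamN l.length (upN l.length (scons a Tm.var) v) := by
      simp [subst1, subst_lamN, subst]
    by_cases hvl : v < l.length
    · have : upN l.length (scons a Tm.var) v = .var v := upN_lt _ _ _ hvl
      rw [this] at he
      refine Red.trans (Red.appList l (Red.of_step hstep)) ?_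
      rw [he]
      have := ih v hvl
      have hidx : (a :: l).getD (l.length + 1 - 1 - v) (.var 0)
          = l.getD (l.length - 1 - v) (.var 0) := by
        have : l.length + 1 - 1 - v = (l.length - 1 - v) + 1 := by omega
        rw [this]; rfl
      simp only [List.length_cons, hidx]
      exact this
    · have hveq : v = l.length := by omega
      subst hveq
      have : upN l.length (scons a Tm.var) l.length = rename (· + l.length) a := by
        have := upN_ge (scons a Tm.var) l.length 0
        simpa [scons] using this
      rw [this] at he
      refine Red.trans (Red.appList l (Red.of_step hstep)) ?_
      rw [he]
      have hidx : (a :: l).getD (l.length + 1 - 1 - l.length) (.var 0) = a := by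
        have : l.length + 1 - 1 - l.length = 0 := by omega
        rw [this]; rfl
      simp only [List.length_cons, hidx]
      exact red_apply_shift l a

lemma getD_map_range (f : ℕ → Tm) (n i : ℕ) (h : i < n) :
    (((List.range n).map f).getD i (.var 0)) = f i := by
  rw [List.getD_eq_getElem?_getD]
  simp [List.getElem?_map, List.getElem?_range, h]

lemma red_case_pi (K i : ℕ) (hi : i < K + 5) (f : ℕ → Tm) :
    Red (caseOf K (piTm K i) f) (f i) := by
  have hlen : ((List.range (K + 5)).map f).length = K + 5 := by simp
  have hv : K + 4 - i < ((List.range (K + 5)).map f).length := by omega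
  have := red_lamN_var ((List.range (K + 5)).map f) (K + 4 - i) hv
  rw [hlen] at this
  have hidx : K + 5 - 1 - (K + 4 - i) = i := by omega
  rw [hidx, getD_map_range f (K + 5) i hi] at this
  exact this

end Proj

section Closed

lemma below_sv (K i n : ℕ) (h : K + 5 ≤ n) : Below n (sv K i) := by
  show K + 4 - i < n; omega

lemma below_lamN (n k : ℕ) (s : Tm) (h : Below (n + k) s) : Below n (lamN k s) := by
  induction k generalizing n with
  | zero => exact h
  | succ k ih =>
    show Below (n + 1) (lamN k s)
    have h' : Below (n + 1 + k) s := by rwa [show n + 1 + k = n + (k + 1) by omega]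
    exact ih (n + 1) h'

lemma below_appList (n : ℕ) (s : Tm) (l : List Tm) (hs : Below n s)
    (hl : ∀ t ∈ l, Below n t) : Below n (appList s l) := by
  induction l generalizing s with
  | nil => exact hs
  | cons a l ih =>
    exact ih (.app s a) ⟨hs, hl a (by simp)⟩ (fun t ht => hl t (by simp [ht]))

lemma below_caseOf (n K : ℕ) (x : Tm) (f : ℕ → Tm) (hx : Below n x)
    (hf : ∀ j, Below n (f j)) : Below n (caseOf K x f) := by
  refine below_appList n x _ hx (fun t ht => ?_)
  simp only [List.mem_map] at ht
  obtain ⟨j, _, rfl⟩ := ht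
  exact hf j

lemma below_piTm (K i : ℕ) : Below 0 (piTm K i) := by
  refine below_lamN 0 (K + 5) _ ?_
  exact below_sv K i _ (by omega)

lemma below_Itm : Below 0 Itm := by show 0 < 1; omega

lemma below_deltaTm (K i : ℕ) : Below 0 (deltaTm K i) := by
  show Below 1 (lamN (K + 5) _)
  refine below_lamN 1 (K + 5) _ ?_
  refine below_caseOf _ K _ _ (by show K + 5 < 1 + (K + 5); omega) (fun j => ?_)
  split <;> exact below_sv K _ _ (by omega)

lemma below_H0 (K : ℕ) : Below 0 (H0 K) := by
  show Below 1 (Tm.lam _)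
  show Below 2 (lamN (K + 5) _)
  refine below_lamN 2 (K + 5) _ ?_
  refine below_caseOf _ K _ _ (by show K + 5 < 2 + (K + 5); omega) (fun j => ?_)
  split <;> exact below_sv K _ _ (by omega)

lemma below_HR (K : ℕ) : Below 0 (HR K) := by
  show Below 1 (Tm.lam _)
  show Below 2 (lamN (K + 5) _)
  refine below_lamN 2 (K + 5) _ ?_
  refine below_caseOf _ K _ _ ?_ (fun j => ?_)
  · exact ⟨by show K + 6 < 2 + (K + 5); omega, below_mono (by omega) (below_piTm K (K + 3))⟩
  · split
    · refine below_caseOf _ K _ _ (by show K + 5 < 2 + (K + 5); omega) (fun j' => ?_)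
      split <;> exact below_sv K _ _ (by omega)
    · exact below_sv K _ _ (by omega)

lemma below_Hstar (K : ℕ) : Below 0 (Hstar K) := by
  show Below 1 (Tm.lam _)
  show Below 2 (lamN (K + 5) _)
  refine below_lamN 2 (K + 5) _ ?_
  refine below_caseOf _ K _ _ ?_ (fun j => ?_)
  · exact ⟨by show K + 5 < 2 + (K + 5); omega, below_mono (by omega) (below_deltaTm K (K + 2))⟩
  · split <;> exact below_sv K _ _ (by omega)

lemma below_Fstar : Below 0 (Tm.lam (.lam (.app (.var 0) Itm))) := by
  exact ⟨by show (0:ℕ) < 2; omega, below_mono (by omega) below_Itm⟩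

lemma below_F0 : Below 0 (Tm.lam Itm) := by
  show Below 1 Itm
  exact below_mono (by omega) below_Itm

lemma red_delta_pi (K i j : ℕ) (hj : j < K + 5) :
    Red (.app (deltaTm K i) (piTm K j))
      (piTm K (if j = K + 3 then i else K + 4)) := by
  have hstep : Step (Tm.app (deltaTm K i) (piTm K j))
      (subst1 (piTm K j) (lamN (K + 5) (caseOf K (.var (K + 5))
        (fun j' => if j' = K + 3 then sv K i else sv K (K + 4))))) := Step.beta _ _
  have he : subst1 (piTm K j) (lamN (K + 5) (caseOf K (.var (K + 5))
        (fun j' => if j' = K + 3 then sv K i else sv K (K + 4))))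
      = lamN (K + 5) (caseOf K (piTm K j)
        (fun j' => if j' = K + 3 then sv K i else sv K (K + 4))) := by
    simp only [subst1, subst_lamN, subst_caseOf]
    have hx : subst (upN (K + 5) (scons (piTm K j) Tm.var)) (Tm.var (K + 5)) = piTm K j := by
      simp only [subst]
      have h5 := upN_ge (scons (piTm K j) Tm.var) (K + 5) 0
      simp only [Nat.zero_add] at h5
      rw [h5]
      exact closed_rename (below_piTm K j)
    rw [hx]
    have hf : (fun j1 => subst (upN (K + 5) (scons (piTm K j) Tm.var))
          (if j1 = K + 3 then sv K i else sv K (K + 4)))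
        = fun j' => if j' = K + 3 then sv K i else sv K (K + 4) := by
      funext j'
      split <;> exact subst_below (fun k hk => upN_lt _ _ _ hk) (below_sv K _ _ (by omega))
    rw [hf]
  refine Red.trans (Red.of_step hstep) ?_
  rw [he]
  refine Red.trans (Red.lamN (K + 5) (red_case_pi K j hj _)) ?_
  split <;> exact Red.refl

end Closed


section Hred

lemma subst_var (σ : ℕ → Tm) (n : ℕ) : subst σ (.var n) = σ n := rfl

lemma subst_app' (σ : ℕ → Tm) (s t : Tm) :
    subst σ (.app s t) = .app (subst σ s) (subst σ t) := rfl

lemma upN5_v5 (K : ℕ) (A B : Tm) :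
    upN (K + 5) (scons B (scons A Tm.var)) (K + 5) = rename (· + (K + 5)) B := by
  have := upN_ge (scons B (scons A Tm.var)) (K + 5) 0
  simpa [scons] using this

lemma upN5_v6 (K : ℕ) (A B : Tm) :
    upN (K + 5) (scons B (scons A Tm.var)) (K + 6) = rename (· + (K + 5)) A := by
  have := upN_ge (scons B (scons A Tm.var)) (K + 5) 1
  rw [show 1 + (K + 5) = K + 6 by omega] at this
  simpa [scons] using this

lemma subst_upN5_sv (K i : ℕ) (σ : ℕ → Tm) :
    subst (upN (K + 5) σ) (sv K i) = sv K i :=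
  subst_below (fun k hk => upN_lt _ _ _ hk) (below_sv K i _ (by omega))

lemma H0_red (K : ℕ) (A B : Tm) :
    Red (.app (.app (H0 K) A) B)
      (lamN (K + 5) (caseOf K (rename (· + (K + 5)) B)
        (fun j => if j = 1 then sv K (K + 1) else sv K (K + 4)))) := by
  have h := red_two_beta (lamN (K + 5) (caseOf K (.var (K + 5))
      (fun j => if j = 1 then sv K (K + 1) else sv K (K + 4)))) A B
  have he : subst (scons B (scons A Tm.var)) (lamN (K + 5) (caseOf K (.var (K + 5))
      (fun j => if j = 1 then sv K (K + 1) else sv K (K + 4))))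
      = lamN (K + 5) (caseOf K (rename (· + (K + 5)) B)
        (fun j => if j = 1 then sv K (K + 1) else sv K (K + 4))) := by
    rw [subst_lamN, subst_caseOf]
    simp only [subst_var, upN5_v5]
    have hf : (fun j => subst (upN (K + 5) (scons B (scons A Tm.var)))
          (if j = 1 then sv K (K + 1) else sv K (K + 4)))
        = fun j => if j = 1 then sv K (K + 1) else sv K (K + 4) := by
      funext j; split <;> exact subst_upN5_sv K _ _
    rw [hf]
  rw [he] at h
  exact h

lemma Hstar_red (K : ℕ) (A B : Tm) :
    Red (.app (.app (Hstar K) A) B)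
      (lamN (K + 5) (caseOf K (.app (rename (· + (K + 5)) B) (deltaTm K (K + 2)))
        (fun j => if j = K + 1 then sv K (K + 1) else sv K (K + 4)))) := by
  have h := red_two_beta (lamN (K + 5) (caseOf K (.app (.var (K + 5)) (deltaTm K (K + 2)))
      (fun j => if j = K + 1 then sv K (K + 1) else sv K (K + 4)))) A B
  have he : subst (scons B (scons A Tm.var)) (lamN (K + 5) (caseOf K
        (.app (.var (K + 5)) (deltaTm K (K + 2)))
        (fun j => if j = K + 1 then sv K (K + 1) else sv K (K + 4))))
      = lamN (K + 5) (caseOf K (.app (rename (· + (K + 5)) B) (deltaTm K (K + 2)))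
        (fun j => if j = K + 1 then sv K (K + 1) else sv K (K + 4))) := by
    rw [subst_lamN, subst_caseOf]
    simp only [subst_app', subst_var, upN5_v5, closed_subst (below_deltaTm K (K + 2))]
    have hf : (fun j => subst (upN (K + 5) (scons B (scons A Tm.var)))
          (if j = K + 1 then sv K (K + 1) else sv K (K + 4)))
        = fun j => if j = K + 1 then sv K (K + 1) else sv K (K + 4) := by
      funext j; split <;> exact subst_upN5_sv K _ _
    rw [hf]
  rw [he] at h
  exact h

lemma HR_red (K : ℕ) (A B : Tm) :
    Red (.app (.app (HR K) A) B)
      (lamN (K + 5) (caseOf K (.app (rename (· + (K + 5)) A) (piTm K (K + 3)))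
        (fun j => if j = K + 2 then
            caseOf K (rename (· + (K + 5)) B) (fun j' => if j' = 1 then sv K 1 else sv K (K + 4))
          else sv K (K + 4)))) := by
  have h := red_two_beta (lamN (K + 5) (caseOf K (.app (.var (K + 6)) (piTm K (K + 3)))
      (fun j => if j = K + 2 then
          caseOf K (.var (K + 5)) (fun j' => if j' = 1 then sv K 1 else sv K (K + 4))
        else sv K (K + 4)))) A B
  have he : subst (scons B (scons A Tm.var)) (lamN (K + 5) (caseOf K
        (.app (.var (K + 6)) (piTm K (K + 3)))
        (fun j => if j = K + 2 then
            caseOf K (.var (K + 5)) (fun j' => if j' = 1 then sv K 1 else sv K (K + 4))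
          else sv K (K + 4))))
      = lamN (K + 5) (caseOf K (.app (rename (· + (K + 5)) A) (piTm K (K + 3)))
        (fun j => if j = K + 2 then
            caseOf K (rename (· + (K + 5)) B) (fun j' => if j' = 1 then sv K 1 else sv K (K + 4))
          else sv K (K + 4))) := by
    rw [subst_lamN, subst_caseOf]
    simp only [subst_app', subst_var, upN5_v6, upN5_v5,
      closed_subst (below_piTm K (K + 3))]
    have hf : (fun j => subst (upN (K + 5) (scons B (scons A Tm.var)))
          (if j = K + 2 then
            caseOf K (.var (K + 5)) (fun j' => if j' = 1 then sv K 1 else sv K (K + 4))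
          else sv K (K + 4)))
        = fun j => if j = K + 2 then
            caseOf K (rename (· + (K + 5)) B) (fun j' => if j' = 1 then sv K 1 else sv K (K + 4))
          else sv K (K + 4) := by
      funext j
      split
      · simp only [subst_caseOf, subst_var, upN5_v5]
        have hf' : (fun j' => subst (upN (K + 5) (scons B (scons A Tm.var)))
              (if j' = 1 then sv K 1 else sv K (K + 4)))
            = fun j' => if j' = 1 then sv K 1 else sv K (K + 4) := by
          funext j'; split <;> exact subst_upN5_sv K _ _
        rw [hf']
      · exact subst_upN5_sv K _ _
    rw [hf]
  rw [he] at h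
  exact h

end Hred


section Typing

lemma get?_replicate_append {α : Type} (a : α) (l : List α) :
    ∀ m k, k < m → (List.replicate m a ++ l)[k]? = some a := by
  intro m
  induction m with
  | zero => omega
  | succ m ih =>
    intro k hk
    cases k with
    | zero => rfl
    | succ k => exact ih k (by omega)

lemma get?_replicate_append_ge {α : Type} (a : α) (l : List α) :
    ∀ m i, (List.replicate m a ++ l)[m + i]? = l[i]? := by
  intro m
  induction m with
  | zero => intro i; simp
  | succ m ih =>
    intro i
    have : m + 1 + i = (m + i) + 1 := by omega
    rw [this]
    show (List.replicate m a ++ l)[m + i]? = l[i]?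
    exact ih i

lemma gamma_p (L K m k : ℕ) (hk : k < m) : (GammaEnv L K m)[k]? = some (tyP K) :=
  get?_replicate_append _ _ m k hk

lemma gamma_z1 (L K m : ℕ) : (GammaEnv L K m)[m + 1]? = some (tyK K) := by
  rw [GammaEnv, get?_replicate_append_ge]; rfl

lemma gamma_z0 (L K m : ℕ) : (GammaEnv L K m)[m + 2]? = some (tyZ0 K) := by
  rw [GammaEnv, get?_replicate_append_ge]; rfl

lemma gamma_zstar (L K m : ℕ) : (GammaEnv L K m)[m]? = some (tyZstar K) := by
  have := get?_replicate_append_ge (tyP K)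
    (tyZstar K :: tyK K :: tyZ0 K :: List.replicate L (tyZ0 K)) m 0
  simpa [GammaEnv] using this

lemma gamma_r (L K m i : ℕ) (hi1 : 1 ≤ i) (hi2 : i ≤ L) :
    (GammaEnv L K m)[m + 3 + L - i]? = some (tyZ0 K) := by
  have h1 : m + 3 + L - i = m + ((L - i) + 3) := by omega
  rw [h1, GammaEnv, get?_replicate_append_ge]
  show (List.replicate L (tyZ0 K))[L - i]? = some (tyZ0 K)
  have := get?_replicate_append (tyZ0 K) [] L (L - i) (by omega)
  simpa using this

lemma typing_Q {L m : ℕ} (K : ℕ) {M : Tm} (h : Qset L m M) :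
    Stlc (GammaEnv L K m) M (tyK K) := by
  induction h with
  | z1 => exact Stlc.var (gamma_z1 L K m)
  | rule i j M hi1 hi2 hj1 hj2 hM ih =>
    refine Stlc.app (Stlc.app (Stlc.var (gamma_r L K m i hi1 hi2)) ?_) ih
    exact Stlc.var (gamma_p L K m (m - j) (by omega))
  | ruleEta i j M hi1 hi2 hj1 hj2 hM ih =>
    refine Stlc.app (Stlc.app (Stlc.var (gamma_r L K m i hi1 hi2)) ?_) ih
    refine Stlc.lam (Stlc.app (s := tyK K) (Stlc.var ?_) (Stlc.var ?_))
    · show (tyK K :: GammaEnv L K m)[m - j + 1]? = some (Ty.arr (tyK K) (tyK K))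
      show (GammaEnv L K m)[m - j]? = some (tyP K)
      exact gamma_p L K m (m - j) (by omega)
    · rfl

end Typing

section Main

/-- `σ` implements `S_F` together with `[p := I]` on the relevant variables. -/
def GoodF (L m : ℕ) (σ : ℕ → Tm) : Prop :=
  (∀ k, k < m → σ k = Itm) ∧ σ m = .lam (.lam (.app (.var 0) Itm)) ∧ σ (m + 1) = .var 0 ∧
  σ (m + 2) = .lam Itm ∧ (∀ k, m + 3 ≤ k → k < m + 3 + L → σ k = Itm)

/-- `σ` implements `S_H` together with `[p := δ_•]` on the relevant variables. -/
def GoodH (K L m : ℕ) (σ : ℕ → Tm) : Prop :=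
  (∀ k, k < m → σ k = deltaTm K (K + 2)) ∧ σ m = Hstar K ∧ σ (m + 1) = piTm K 1 ∧
  σ (m + 2) = H0 K ∧ (∀ k, m + 3 ≤ k → k < m + 3 + L → σ k = HR K)

lemma red_I (X : Tm) : Red (.app Itm X) X := Red.of_step (Step.beta (.var 0) X)

lemma subst1_up (N : Tm) (σ : ℕ → Tm) (M : Tm) :
    subst1 N (subst (up σ) M) = subst (scons N σ) M := by
  simp only [subst1, subst_subst]
  refine subst_ext (fun n => ?_) M
  cases n with
  | zero => rfl
  | succ n =>
    show subst (scons N Tm.var) (rename Nat.succ (σ n)) = σ n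
    rw [subst_rename]
    exact (subst_ext (fun k => rfl) (σ n)).trans (subst_id (σ n))

lemma beta_under (N : Tm) (σ : ℕ → Tm) (ξ : ℕ → ℕ) (M : Tm) :
    subst1 N (rename (upRen ξ) (subst (up σ) M))
      = subst (scons N (fun k => rename ξ (σ k))) M := by
  have h1 : rename (upRen ξ) (subst (up σ) M) = subst (up (fun k => rename ξ (σ k))) M := by
    rw [rename_subst]
    refine subst_ext (fun n => ?_) M
    cases n with
    | zero => rfl
    | succ n =>
      show rename (upRen ξ) (rename Nat.succ (σ n)) = rename Nat.succ (rename ξ (σ n))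
      rw [rename_rename, rename_rename]
      exact rename_ext (fun k => by simp [upRen]) (σ n)
  rw [h1, subst1_up]

lemma conv_QF {L m : ℕ} {M : Tm} (h : Qset L m M) :
    ∀ σ, GoodF L m σ → Conv (subst σ M) (.var 0) := by
  induction h with
  | z1 =>
    intro σ hσ
    rw [subst_var, hσ.2.2.1]
    exact Conv.refl _
  | rule i j M hi1 hi2 hj1 hj2 hM ih =>
    intro σ hσ
    simp only [subst_app', subst_var]
    rw [hσ.2.2.2.2 (m + 3 + L - i) (by omega) (by omega), hσ.1 (m - j) (by omega)]
    refine Conv.trans ((Red.appL _ (red_I Itm)).conv) ?_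
    exact Conv.trans (red_I _).conv (ih σ hσ)
  | ruleEta i j M hi1 hi2 hj1 hj2 hM ih =>
    intro σ hσ
    simp only [subst_app', subst_var, subst]
    rw [hσ.2.2.2.2 (m + 3 + L - i) (by omega) (by omega)]
    have hup : up σ (m - j + 1) = Itm := by
      show rename Nat.succ (σ (m - j)) = Itm
      rw [hσ.1 (m - j) (by omega)]
      exact closed_rename below_Itm
    rw [hup]
    refine Conv.trans ((Red.appL _ (red_I _)).conv) ?_
    have hb : Step (Tm.app (.lam (.app Itm (.var 0))) (subst σ M))
        (subst1 (subst σ M) (.app Itm (.var 0))) := Step.beta _ _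
    have he : subst1 (subst σ M) (.app Itm (.var 0)) = .app Itm (subst σ M) := by
      show Tm.app (subst _ Itm) _ = _
      rw [closed_subst below_Itm]
      rfl
    rw [he] at hb
    refine Conv.trans (Red.of_step hb).conv ?_
    exact Conv.trans (red_I _).conv (ih σ hσ)

lemma conv_RF {L m : ℕ} {M : Tm} (h : Rset L m M) :
    ∀ σ, GoodF L m σ → Conv (subst σ M) (.var 0) := by
  induction h with
  | init m N M hQ =>
    intro σ hσ
    simp only [subst_app', subst_var]
    rw [hσ.2.2.2.1]
    have hb : Step (Tm.app (.lam Itm) (subst σ N)) (subst1 (subst σ N) Itm) := Step.beta _ _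
    have he : subst1 (subst σ N) Itm = Itm := closed_subst below_Itm
    rw [he] at hb
    refine Conv.trans ((Red.appL _ (Red.of_step hb)).conv) ?_
    exact Conv.trans (red_I _).conv (conv_QF hQ σ hσ)
  | expand m N M hR ih =>
    intro σ hσ
    simp only [subst_app', subst_var, subst]
    rw [hσ.2.1]
    have h2 := red_two_beta (.app (.var 0) Itm) (subst σ N) (.lam (subst (up σ) M))
    have he : subst (scons (.lam (subst (up σ) M)) (scons (subst σ N) Tm.var))
          (.app (.var 0) Itm)
        = .app (.lam (subst (up σ) M)) Itm := by
      show Tm.app _ (subst _ Itm) = _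
      rw [closed_subst below_Itm]
      rfl
    rw [he] at h2
    refine Conv.trans h2.conv ?_
    have hb : Step (Tm.app (.lam (subst (up σ) M)) Itm)
        (subst1 Itm (subst (up σ) M)) := Step.beta _ _
    rw [subst1_up] at hb
    refine Conv.trans (Red.of_step hb).conv ?_
    refine ih (scons Itm σ) ?_
    obtain ⟨g1, g2, g3, g4, g5⟩ := hσ
    refine ⟨fun k hk => ?_, g2, g3, g4, fun k hk1 hk2 => ?_⟩
    · cases k with
      | zero => rfl
      | succ k => exact g1 k (by omega)
    · cases k with
      | zero => omega
      | succ k => exact g5 k (by omega) (by omega)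

end Main


section MainH

lemma conv_case_head {K : ℕ} {x x' : Tm} (f : ℕ → Tm) (h : Conv x x') :
    Conv (caseOf K x f) (caseOf K x' f) := Conv.appList _ h

lemma QH_tail (K : ℕ) (x y : Tm) (hx : Conv x (piTm K (K + 2))) (hy : Conv y (piTm K 1)) :
    Conv (lamN (K + 5) (caseOf K x (fun j => if j = K + 2 then
        caseOf K y (fun j' => if j' = 1 then sv K 1 else sv K (K + 4))
      else sv K (K + 4)))) (piTm K 1) := by
  refine Conv.trans (Conv.lamN _ (conv_case_head _ hx)) ?_
  refine Conv.trans (Conv.lamN _ (red_case_pi K (K + 2) (by omega) _).conv) ?_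
  rw [if_pos rfl]
  refine Conv.trans (Conv.lamN _ (conv_case_head _ hy)) ?_
  refine Conv.trans (Conv.lamN _ (red_case_pi K 1 (by omega) _).conv) ?_
  rw [if_pos rfl]
  exact Conv.refl _

lemma conv_QH {K L m : ℕ} {M : Tm} (h : Qset L m M) :
    ∀ σ, GoodH K L m σ → Conv (subst σ M) (piTm K 1) := by
  induction h with
  | z1 =>
    intro σ hσ
    rw [subst_var, hσ.2.2.1]
    exact Conv.refl _
  | rule i j M hi1 hi2 hj1 hj2 hM ih =>
    intro σ hσ
    simp only [subst_app', subst_var]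
    rw [hσ.2.2.2.2 (m + 3 + L - i) (by omega) (by omega), hσ.1 (m - j) (by omega)]
    have hr := HR_red K (deltaTm K (K + 2)) (subst σ M)
    rw [closed_rename (below_deltaTm K (K + 2))] at hr
    refine Conv.trans hr.conv (QH_tail K _ _ ?_ ?_)
    · have hd := red_delta_pi K (K + 2) (K + 3) (by omega)
      rw [if_pos rfl] at hd
      exact hd.conv
    · have := Conv.rename (· + (K + 5)) (ih σ hσ)
      rwa [closed_rename (below_piTm K 1)] at this
  | ruleEta i j M hi1 hi2 hj1 hj2 hM ih =>
    intro σ hσ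
    simp only [subst_app', subst_var, subst]
    rw [hσ.2.2.2.2 (m + 3 + L - i) (by omega) (by omega)]
    have hup : up σ (m - j + 1) = deltaTm K (K + 2) := by
      show rename Nat.succ (σ (m - j)) = _
      rw [hσ.1 (m - j) (by omega)]
      exact closed_rename (below_deltaTm K (K + 2))
    rw [hup]
    have hbelowA : Below 0 (Tm.lam (.app (deltaTm K (K + 2)) (.var 0))) := by
      show Below 1 (Tm.app (deltaTm K (K + 2)) (.var 0))
      exact ⟨below_mono (by omega) (below_deltaTm K (K + 2)), by show (0:ℕ) < 1; omega⟩
    have hr := HR_red K (.lam (.app (deltaTm K (K + 2)) (.var 0))) (subst σ M)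
    rw [closed_rename hbelowA] at hr
    refine Conv.trans hr.conv (QH_tail K _ _ ?_ ?_)
    · have hb : Step (Tm.app (.lam (.app (deltaTm K (K + 2)) (.var 0))) (piTm K (K + 3)))
          (subst1 (piTm K (K + 3)) (.app (deltaTm K (K + 2)) (.var 0))) := Step.beta _ _
      have he : subst1 (piTm K (K + 3)) (.app (deltaTm K (K + 2)) (.var 0))
          = .app (deltaTm K (K + 2)) (piTm K (K + 3)) := by
        show Tm.app (subst _ (deltaTm K (K + 2))) _ = _
        rw [closed_subst (below_deltaTm K (K + 2))]
        rfl
      rw [he] at hb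
      refine Conv.trans (Red.of_step hb).conv ?_
      have hd := red_delta_pi K (K + 2) (K + 3) (by omega)
      rw [if_pos rfl] at hd
      exact hd.conv
    · have := Conv.rename (· + (K + 5)) (ih σ hσ)
      rwa [closed_rename (below_piTm K 1)] at this

lemma conv_RH {K L m : ℕ} {M : Tm} (h : Rset L m M) :
    ∀ σ, GoodH K L m σ → Conv (subst σ M) (piTm K (K + 1)) := by
  induction h with
  | init m N M hQ =>
    intro σ hσ
    simp only [subst_app', subst_var]
    rw [hσ.2.2.2.1]
    refine Conv.trans (H0_red K (subst σ N) (subst σ M)).conv ?_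
    have hy : Conv (rename (· + (K + 5)) (subst σ M)) (piTm K 1) := by
      have := Conv.rename (· + (K + 5)) (conv_QH hQ σ hσ)
      rwa [closed_rename (below_piTm K 1)] at this
    refine Conv.trans (Conv.lamN _ (conv_case_head _ hy)) ?_
    refine Conv.trans (Conv.lamN _ (red_case_pi K 1 (by omega) _).conv) ?_
    rw [if_pos rfl]
    exact Conv.refl _
  | expand m N M hR ih =>
    intro σ hσ
    simp only [subst_app', subst_var, subst]
    rw [hσ.2.1]
    refine Conv.trans (Hstar_red K (subst σ N) (.lam (subst (up σ) M))).conv ?_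
    have hren : rename (· + (K + 5)) (Tm.lam (subst (up σ) M))
        = .lam (rename (upRen (· + (K + 5))) (subst (up σ) M)) := rfl
    rw [hren]
    have hx : Conv (Tm.app (.lam (rename (upRen (· + (K + 5))) (subst (up σ) M)))
        (deltaTm K (K + 2))) (piTm K (K + 1)) := by
      have hb : Step (Tm.app (.lam (rename (upRen (· + (K + 5))) (subst (up σ) M)))
            (deltaTm K (K + 2)))
          (subst1 (deltaTm K (K + 2)) (rename (upRen (· + (K + 5))) (subst (up σ) M))) :=
        Step.beta _ _
      rw [beta_under] at hb
      refine Conv.trans (Red.of_step hb).conv ?_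
      refine ih (scons (deltaTm K (K + 2)) (fun k => rename (· + (K + 5)) (σ k))) ?_
      obtain ⟨g1, g2, g3, g4, g5⟩ := hσ
      refine ⟨fun k hk => ?_, ?_, ?_, ?_, fun k hk1 hk2 => ?_⟩
      · cases k with
        | zero => rfl
        | succ k =>
          show rename _ (σ k) = _
          rw [g1 k (by omega)]
          exact closed_rename (below_deltaTm K (K + 2))
      · show rename _ (σ m) = _
        rw [g2]; exact closed_rename (below_Hstar K)
      · show rename _ (σ (m + 1)) = _
        rw [g3]; exact closed_rename (below_piTm K 1)
      · show rename _ (σ (m + 2)) = _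
        rw [g4]; exact closed_rename (below_H0 K)
      · cases k with
        | zero => omega
        | succ k =>
          show rename _ (σ k) = _
          rw [g5 k (by omega) (by omega)]
          exact closed_rename (below_HR K)
    refine Conv.trans (Conv.lamN _ (conv_case_head _ hx)) ?_
    refine Conv.trans (Conv.lamN _ (red_case_pi K (K + 1) (by omega) _).conv) ?_
    rw [if_pos rfl]
    exact Conv.refl _

end MainH


lemma goodF_SF (L m : ℕ) : GoodF L m (SF L m (fun _ => Itm)) := by
  refine ⟨fun k hk => ?_, ?_, ?_, ?_, fun k hk1 hk2 => ?_⟩ <;>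
    · simp only [SF, mkSub]
      split_ifs <;> first | rfl | omega

lemma goodH_SH (K L m : ℕ) : GoodH K L m (SH L K m (fun _ => deltaTm K (K + 2))) := by
  refine ⟨fun k hk => ?_, ?_, ?_, ?_, fun k hk1 hk2 => ?_⟩ <;>
    · simp only [SH, mkSub]
      split_ifs <;> first | rfl | omega

/-- (a) Every `M ∈ Q_m` satisfies `Γ_m ⊢ M : κ`, `S_F(M)[p_1 := I, …, p_m := I] =β u`,
and `S_H(M)[p_1 := δ_•, …, p_m := δ_•] =β π_1`; (b) every `M ∈ R_m` satisfies
`S_F(M)[p_1 := I, …, p_m := I] =β u` and `S_H(M)[p_1 := δ_•, …, p_m := δ_•] =β π_$`. -/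
theorem QR_sound (K : ℕ) (hK : 1 ≤ K) (Rs : List SRule) (hL : Rs ≠ [])
    (hsym : ∀ r ∈ Rs, r.1.1 ≤ K ∧ r.1.2 ≤ K ∧ r.2.1 ≤ K ∧ r.2.2 ≤ K)
    (m : ℕ) (hm : 0 < m) :
    (∀ M : Tm, Qset Rs.length m M →
      Stlc (GammaEnv Rs.length K m) M (tyK K) ∧
      Conv (subst (SF Rs.length m (fun _ => Itm)) M) (.var 0) ∧
      Conv (subst (SH Rs.length K m (fun _ => deltaTm K (K + 2))) M) (piTm K 1)) ∧
    (∀ M : Tm, Rset Rs.length m M →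
      Conv (subst (SF Rs.length m (fun _ => Itm)) M) (.var 0) ∧
      Conv (subst (SH Rs.length K m (fun _ => deltaTm K (K + 2))) M) (piTm K (K + 1))) := by
  constructor
  · intro M hQ
    exact ⟨typing_Q K hQ, conv_QF hQ _ (goodF_SF Rs.length m),
      conv_QH hQ _ (goodH_SH K Rs.length m)⟩
  · intro M hR
    exact ⟨conv_RF hR _ (goodF_SF Rs.length m), conv_RH hR _ (goodH_SH K Rs.length m)⟩
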